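/- arXiv:1508.05273 — 4 statements merged into one kernel-verified Lean document; each statement's English description precedes it below -/
import Mathlib

section
/- Let A be a complex I₁ × (I₂·I₃) matrix (indexed by Fin I₁ and Fin I₂ × Fin I₃, viewed as the mode-1 unfolding of a three-way tensor). Suppose σ ≥ 0 and the unit vectors u₁ : Fin I₁ → ℂ and v₁ : Fin I₂ × Fin I₃ → ℂ form a dominant singular triplet of A, i.e. A *ᵥ v₁ = σ • u₁, Aᴴ *ᵥ u₁ = σ • v₁, and ‖A *ᵥ z‖ ≤ σ·‖z‖ for every z. Let u₂ : Fin I₂ → ℂ and u₃ : Fin I₃ → ℂ be any unit vectors, set λ = ∑_{i,j,k} A i (j,k) · conj(u₁ i) · conj(u₂ j) · conj(u₃ k), and let X_TH be the matrix with entries X_TH i (j,k) = λ · u₁ i · u₂ j · u₃ k (the THOSVD rank-1 approximation). Let w : Fin I₂ × Fin I₃ → ℂ be a unit vector of product form (there exist a, b with w (j,k) = a j · b k for all j,k) satisfying |∑_{j,k} conj(v₁ (j,k)) · w (j,k)| ≥ |∑_{j,k} conj(v₁ (j,k)) · z (j,k)| for every unit vector z of product form, and let X_Se be the matrix with entries X_Se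 i (j,k) = (∑_{j',k'} A i (j',k') · w (j',k')) · conj(w (j,k)) (the SeROAP rank-1 approximation). Then ‖A − X_Se‖_F ≤ ‖A − X_TH‖_F. -/
/-!
For a unit vector `w` and any `y`, the Frobenius error of the rank-one matrix `y wᴴ` is
`‖A‖² - 2 Re ⟨y, A w⟩ + ‖y‖²`. Both approximations have this shape: SeROAP with `y = A w`, with
error `‖A‖² - ‖A w‖²`, and THOSVD with `w = conj (u₂ ⊗ u₃)` and `y = λ u₁`, with error
`‖A‖² - |λ|²`. Since `Aᴴ u₁ = σ v₁`, we have `λ = σ ⟨v₁, conj (u₂ ⊗ u₃)⟩`, so the choice of `w`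
and Cauchy–Schwarz give `|λ| ≤ σ |⟨v₁, w⟩| = |⟨u₁, A w⟩| ≤ ‖A w‖`.
-/

open ComplexConjugate Matrix

section

variable {𝕜 : Type*} [RCLike 𝕜] {m n : Type*} [Fintype m] [Fintype n]

lemma norm_sub_mul_conj_sq (a y w : 𝕜) :
    ‖a - y * conj w‖ ^ 2 = ‖a‖ ^ 2 - 2 * RCLike.re (conj y * (a * w)) + ‖y‖ ^ 2 * ‖w‖ ^ 2 := by
  rw [@norm_sub_sq 𝕜 𝕜, RCLike.inner_apply, norm_mul, RCLike.norm_conj, mul_pow,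
    ← RCLike.conj_re]
  simp only [map_mul, RCLike.conj_conj]
  ring_nf

lemma sum_sum_norm_sub_rankOne_sq (A : Matrix m n 𝕜) (y : m → 𝕜) {w : n → 𝕜}
    (hw : ∑ p, ‖w p‖ ^ 2 = 1) :
    ∑ i, ∑ p, ‖A i p - y i * conj (w p)‖ ^ 2 =
      ∑ i, ∑ p, ‖A i p‖ ^ 2 - 2 * RCLike.re (star y ⬝ᵥ (A *ᵥ w)) + ∑ i, ‖y i‖ ^ 2 := by
  have hrow : ∀ i, ∑ p, ‖A i p - y i * conj (w p)‖ ^ 2 =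
      ∑ p, ‖A i p‖ ^ 2 - 2 * RCLike.re (conj (y i) * (A *ᵥ w) i) + ‖y i‖ ^ 2 := by
    intro i
    simp only [norm_sub_mul_conj_sq, Finset.sum_add_distrib, Finset.sum_sub_distrib,
      ← Finset.mul_sum, hw, mul_one, ← map_sum, mulVec, dotProduct]
  simp only [hrow, Finset.sum_add_distrib, Finset.sum_sub_distrib, ← Finset.mul_sum,
    ← map_sum, dotProduct, Pi.star_apply, RCLike.star_def]

lemma norm_star_dotProduct_le (x y : n → 𝕜) :
    ‖star x ⬝ᵥ y‖ ≤ √(∑ i, ‖x i‖ ^ 2) * √(∑ i, ‖y i‖ ^ 2) := by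
  simpa [EuclideanSpace.norm_eq, EuclideanSpace.inner_toLp_toLp, dotProduct_comm]
    using norm_inner_le_norm (𝕜 := 𝕜) (WithLp.toLp 2 x) (WithLp.toLp 2 y)

lemma re_star_dotProduct_self (x : n → 𝕜) : RCLike.re (star x ⬝ᵥ x) = ∑ i, ‖x i‖ ^ 2 := by
  simp [dotProduct, RCLike.conj_mul]

lemma sum_sum_norm_sub_mulVec_rankOne_sq (A : Matrix m n 𝕜) {w : n → 𝕜}
    (hw : ∑ p, ‖w p‖ ^ 2 = 1) :
    ∑ i, ∑ p, ‖A i p - (A *ᵥ w) i * conj (w p)‖ ^ 2 =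
      ∑ i, ∑ p, ‖A i p‖ ^ 2 - ∑ i, ‖(A *ᵥ w) i‖ ^ 2 := by
  rw [sum_sum_norm_sub_rankOne_sq A _ hw, re_star_dotProduct_self]
  ring

lemma sum_sum_norm_sub_smul_rankOne_sq (A : Matrix m n 𝕜) {u : m → 𝕜} {z : n → 𝕜}
    (hu : ∑ i, ‖u i‖ ^ 2 = 1) (hz : ∑ p, ‖z p‖ ^ 2 = 1) :
    ∑ i, ∑ p, ‖A i p - star u ⬝ᵥ (A *ᵥ z) * u i * conj (z p)‖ ^ 2 =
      ∑ i, ∑ p, ‖A i p‖ ^ 2 - ‖star u ⬝ᵥ (A *ᵥ z)‖ ^ 2 := by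
  have h := sum_sum_norm_sub_rankOne_sq A ((star u ⬝ᵥ (A *ᵥ z)) • u) hz
  simp only [Pi.smul_apply, smul_eq_mul, star_smul, smul_dotProduct, norm_mul, mul_pow,
    ← Finset.mul_sum, hu, RCLike.star_def, RCLike.conj_mul, ← RCLike.ofReal_pow,
    RCLike.ofReal_re] at h
  rw [h]
  ring

lemma star_dotProduct_mulVec_eq_of_conjTranspose_mulVec {A : Matrix m n 𝕜} {u : m → 𝕜}
    {v : n → 𝕜} {σ : ℝ} (hAu : Aᴴ *ᵥ u = σ • v) (x : n → 𝕜) :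
    star u ⬝ᵥ (A *ᵥ x) = σ • (star v ⬝ᵥ x) := by
  rw [dotProduct_mulVec, ← conjTranspose_conjTranspose A, ← star_mulVec, hAu, star_smul,
    smul_dotProduct, star_trivial]

lemma sum_norm_sq_mul_prod {ι κ : Type*} [Fintype ι] [Fintype κ] (a : ι → 𝕜) (b : κ → 𝕜) :
    ∑ p : ι × κ, ‖a p.1 * b p.2‖ ^ 2 = (∑ j, ‖a j‖ ^ 2) * ∑ k, ‖b k‖ ^ 2 := by
  simp [norm_mul, mul_pow, Fintype.sum_prod_type, Finset.sum_mul_sum]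

lemma norm_sq_star_dotProduct_mulVec_le {A : Matrix m n 𝕜} {u : m → 𝕜} {v z w : n → 𝕜}
    {σ : ℝ} (hσ : 0 ≤ σ) (hAu : Aᴴ *ᵥ u = σ • v) (hu : ∑ i, ‖u i‖ ^ 2 = 1)
    (hzw : ‖star v ⬝ᵥ z‖ ≤ ‖star v ⬝ᵥ w‖) :
    ‖star u ⬝ᵥ (A *ᵥ z)‖ ^ 2 ≤ ∑ i, ‖(A *ᵥ w) i‖ ^ 2 := by
  have hw : σ * ‖star v ⬝ᵥ w‖ ≤ √(∑ i, ‖(A *ᵥ w) i‖ ^ 2) := by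
    simpa [star_dotProduct_mulVec_eq_of_conjTranspose_mulVec hAu, norm_smul, hu,
      abs_of_nonneg hσ] using norm_star_dotProduct_le u (A *ᵥ w)
  rw [← Real.le_sqrt (norm_nonneg _) (Finset.sum_nonneg fun i _ => sq_nonneg _),
    star_dotProduct_mulVec_eq_of_conjTranspose_mulVec hAu, norm_smul, Real.norm_of_nonneg hσ]
  exact (mul_le_mul_of_nonneg_left hzw hσ).trans hw

end

theorem seroap_le_thosvd_general {I1 I2 I3 : ℕ}
    (A : Matrix (Fin I1) (Fin I2 × Fin I3) ℂ)
    (σ : ℝ) (hσ : 0 ≤ σ)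
    (u1 : Fin I1 → ℂ) (v1 : Fin I2 × Fin I3 → ℂ)
    (hu1 : Real.sqrt (∑ i, ‖u1 i‖ ^ 2) = 1)
    (hAu : Matrix.mulVec (Matrix.conjTranspose A) u1 = σ • v1)
    (u2 : Fin I2 → ℂ) (u3 : Fin I3 → ℂ)
    (hu2 : Real.sqrt (∑ j, ‖u2 j‖ ^ 2) = 1)
    (hu3 : Real.sqrt (∑ k, ‖u3 k‖ ^ 2) = 1)
    (lam : ℂ)
    (hlam : lam = ∑ i, ∑ j, ∑ k, A i (j, k) * conj (u1 i) * conj (u2 j) * conj (u3 k))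
    (XTH : Matrix (Fin I1) (Fin I2 × Fin I3) ℂ)
    (hXTH : ∀ i j k, XTH i (j, k) = lam * u1 i * u2 j * u3 k)
    (w : Fin I2 × Fin I3 → ℂ)
    (hwunit : Real.sqrt (∑ p, ‖w p‖ ^ 2) = 1)
    (hwmax : ∀ z : Fin I2 × Fin I3 → ℂ,
      Real.sqrt (∑ p, ‖z p‖ ^ 2) = 1 →
      (∃ a : Fin I2 → ℂ, ∃ b : Fin I3 → ℂ, ∀ j k, z (j, k) = a j * b k) →
      ‖∑ p, conj (v1 p) * z p‖ ≤ ‖∑ p, conj (v1 p) * w p‖)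
    (XSe : Matrix (Fin I1) (Fin I2 × Fin I3) ℂ)
    (hXSe : ∀ i j k, XSe i (j, k) = (∑ p, A i p * w p) * conj (w (j, k))) :
    Real.sqrt (∑ i, ∑ p, ‖A i p - XSe i p‖ ^ 2) ≤
      Real.sqrt (∑ i, ∑ p, ‖A i p - XTH i p‖ ^ 2) := by
  set z : Fin I2 × Fin I3 → ℂ := fun p => star u2 p.1 * star u3 p.2
  have hz : ∑ p, ‖z p‖ ^ 2 = 1 := by
    rw [sum_norm_sq_mul_prod]
    simp only [Pi.star_apply, norm_star, Real.sqrt_eq_one.mp hu2, Real.sqrt_eq_one.mp hu3,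
      one_mul]
  have hlam_eq : lam = star u1 ⬝ᵥ (A *ᵥ z) := by
    simp only [hlam, dotProduct, mulVec, Fintype.sum_prod_type, Finset.mul_sum, z]
    exact Fintype.sum_congr _ _ fun i => Fintype.sum_congr _ _ fun j =>
      Fintype.sum_congr _ _ fun k => by simp only [Pi.star_apply, RCLike.star_def]; ring
  have hXSe_eq : ∀ i p, XSe i p = (A *ᵥ w) i * conj (w p) := fun i p => hXSe i p.1 p.2
  have hXTH_eq : ∀ i p, XTH i p = lam * u1 i * conj (z p) := fun i p => by
    simp only [hXTH i p.1 p.2, z, Pi.star_apply, map_mul, RCLike.star_def, RCLike.conj_conj]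
    ring
  have hlam_le : ‖lam‖ ^ 2 ≤ ∑ i, ‖(A *ᵥ w) i‖ ^ 2 :=
    hlam_eq ▸ norm_sq_star_dotProduct_mulVec_le hσ hAu (Real.sqrt_eq_one.mp hu1)
      (hwmax z (by rw [hz, Real.sqrt_one]) ⟨star u2, star u3, fun _ _ => rfl⟩)
  simp only [hXSe_eq, hXTH_eq, sum_sum_norm_sub_mulVec_rankOne_sq A (Real.sqrt_eq_one.mp hwunit)]
  rw [hlam_eq, sum_sum_norm_sub_smul_rankOne_sq A (Real.sqrt_eq_one.mp hu1) hz, ← hlam_eq]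
  gcongr

/-- SeROAP performs at least as well as THOSVD on three-way tensors (Proposition 1):
given the mode-1 unfolding `A` of a three-way tensor, the THOSVD rank-1 approximation built
from dominant singular vectors `u₁, u₂, u₃` of the unfoldings, and the SeROAP approximation
built from the closest unit product vector `w` to the dominant right singular vector `v₁`,
the Frobenius error of SeROAP is at most that of THOSVD. -/
theorem seroap_le_thosvd {I1 I2 I3 : ℕ}
    (A : Matrix (Fin I1) (Fin I2 × Fin I3) ℂ)
    (σ : ℝ) (hσ : 0 ≤ σ)
    (u1 : Fin I1 → ℂ) (v1 : Fin I2 × Fin I3 → ℂ)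
    (hu1 : Real.sqrt (∑ i, ‖u1 i‖ ^ 2) = 1)
    (hv1 : Real.sqrt (∑ p, ‖v1 p‖ ^ 2) = 1)
    (hAv : Matrix.mulVec A v1 = σ • u1)
    (hAu : Matrix.mulVec (Matrix.conjTranspose A) u1 = σ • v1)
    (hdom : ∀ z : Fin I2 × Fin I3 → ℂ,
      Real.sqrt (∑ i, ‖Matrix.mulVec A z i‖ ^ 2) ≤
        σ * Real.sqrt (∑ p, ‖z p‖ ^ 2))
    (u2 : Fin I2 → ℂ) (u3 : Fin I3 → ℂ)
    (hu2 : Real.sqrt (∑ j, ‖u2 j‖ ^ 2) = 1)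
    (hu3 : Real.sqrt (∑ k, ‖u3 k‖ ^ 2) = 1)
    (lam : ℂ)
    (hlam : lam = ∑ i, ∑ j, ∑ k, A i (j, k) * conj (u1 i) * conj (u2 j) * conj (u3 k))
    (XTH : Matrix (Fin I1) (Fin I2 × Fin I3) ℂ)
    (hXTH : ∀ i j k, XTH i (j, k) = lam * u1 i * u2 j * u3 k)
    (w : Fin I2 × Fin I3 → ℂ)
    (hwunit : Real.sqrt (∑ p, ‖w p‖ ^ 2) = 1)
    (hwprod : ∃ a : Fin I2 → ℂ, ∃ b : Fin I3 → ℂ, ∀ j k, w (j, k) = a j * b k)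
    (hwmax : ∀ z : Fin I2 × Fin I3 → ℂ,
      Real.sqrt (∑ p, ‖z p‖ ^ 2) = 1 →
      (∃ a : Fin I2 → ℂ, ∃ b : Fin I3 → ℂ, ∀ j k, z (j, k) = a j * b k) →
      ‖∑ p, conj (v1 p) * z p‖ ≤ ‖∑ p, conj (v1 p) * w p‖)
    (XSe : Matrix (Fin I1) (Fin I2 × Fin I3) ℂ)
    (hXSe : ∀ i j k, XSe i (j, k) = (∑ p, A i p * w p) * conj (w (j, k))) :
    Real.sqrt (∑ i, ∑ p, ‖A i p - XSe i p‖ ^ 2) ≤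
      Real.sqrt (∑ i, ∑ p, ‖A i p - XTH i p‖ ^ 2) :=
  seroap_le_thosvd_general A σ hσ u1 v1 hu1 hAu u2 u3 hu2 hu3 lam hlam XTH hXTH w hwunit hwmax XSe
    hXSe
end

section
/- Let T : Fin I₁ → Fin I₂ → Fin I₃ → ℂ be a three-way tensor. For unit vectors x : Fin I₁ → ℂ and y : Fin I₂ → ℂ define g(x,y) = ∑_k |∑_{i,j} T i j k · conj(x i) · conj(y j)|². Let x₀, y₀ be unit vectors and β : Fin I₃ → ℂ arbitrary, so that φ(T) with entries β k · x₀ i · y₀ j is an arbitrary rank-1 approximation of T built on (x₀, y₀). Suppose (x_t) and (y_t) are sequences of unit vectors with x_0 = x₀, such that for every t, y_{t+1} maximizes y ↦ g(x_t, y) over the unit sphere and x_{t+1} maximizes x ↦ g(x, y_{t+1}) over the unit sphere (the coupled-eigenvalue iteration). Then for every t ≥ 1, setting α* k = ∑_{i,j} T i j k · conj(x_t i) · conj(y_t j) and φ*(T) the tensor with entries α* k · x_t i · y_t j, one has ∑_{i,j,k} |T i j k − φ*(T) i j k|² ≤ ∑_{i,j,k} |T i j k − φ(T) i j k|². -/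
/-!
For a unit vector `u` of an inner product space,
`‖v - b • u‖² = ‖v‖² - |⟪u, v⟫|² + |b - ⟪u, v⟫|²`. Applied slice by slice with `u = x ⊗ y`, the
squared Frobenius error of the rank-one tensor `β ⊗ x ⊗ y` is `‖T‖² - g(x, y) + ∑ₖ |βₖ - α*ₖ|²`,
so the best error on `(x, y)` is `‖T‖² - g(x, y)`, attained at `β = α*`. Each half-step of the
alternating maximization can only increase `g`, hence only decrease that error.
-/

open ComplexConjugate

theorem norm_sub_smul_sq_of_norm_eq_one {𝕜 E : Type*} [RCLike 𝕜] [SeminormedAddCommGroup E]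
    [InnerProductSpace 𝕜 E] {u : E} (hu : ‖u‖ = 1) (v : E) (b : 𝕜) :
    ‖v - b • u‖ ^ 2 = ‖v‖ ^ 2 - ‖inner 𝕜 u v‖ ^ 2 + ‖b - inner 𝕜 u v‖ ^ 2 := by
  have hre : RCLike.re (inner 𝕜 v (b • u)) = RCLike.re (inner 𝕜 b (inner 𝕜 u v)) := by
    rw [inner_smul_right, ← inner_conj_symm, RCLike.inner_apply, ← RCLike.conj_re, map_mul,
      RCLike.conj_conj, mul_comm]
  rw [norm_sub_sq (𝕜 := 𝕜), norm_sub_sq (𝕜 := 𝕜), norm_smul, hu, mul_one, hre]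
  ring

section RankOneResidual

variable {ι κ μ : Type*} [Fintype ι] [Fintype κ] [Fintype μ]

theorem sum_norm_sub_mul_mul_sq (M : ι → κ → ℂ) {x : ι → ℂ} {y : κ → ℂ}
    (hx : ∑ i, ‖x i‖ ^ 2 = 1) (hy : ∑ j, ‖y j‖ ^ 2 = 1) (b : ℂ) :
    ∑ i, ∑ j, ‖M i j - b * x i * y j‖ ^ 2 =
      ∑ i, ∑ j, ‖M i j‖ ^ 2 - ‖∑ i, ∑ j, M i j * conj (x i) * conj (y j)‖ ^ 2
        + ‖b - ∑ i, ∑ j, M i j * conj (x i) * conj (y j)‖ ^ 2 := by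
  let u : EuclideanSpace ℂ (ι × κ) := WithLp.toLp 2 fun p => x p.1 * y p.2
  let v : EuclideanSpace ℂ (ι × κ) := WithLp.toLp 2 fun p => M p.1 p.2
  have hu : ‖u‖ = 1 := by
    rw [← pow_eq_one_iff_of_nonneg (norm_nonneg u) two_ne_zero, EuclideanSpace.norm_sq_eq,
      Fintype.sum_prod_type]
    simp only [u, norm_mul, mul_pow, ← Finset.mul_sum, hy, mul_one, hx]
  have huv : inner ℂ u v = ∑ i, ∑ j, M i j * conj (x i) * conj (y j) := by
    rw [PiLp.inner_apply, Fintype.sum_prod_type]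
    simp only [u, v, RCLike.inner_apply, map_mul, mul_assoc]
  have key := norm_sub_smul_sq_of_norm_eq_one hu v b
  rw [huv, EuclideanSpace.norm_sq_eq, EuclideanSpace.norm_sq_eq, Fintype.sum_prod_type,
    Fintype.sum_prod_type] at key
  simpa only [u, v, WithLp.ofLp_sub, WithLp.ofLp_smul, Pi.sub_apply, Pi.smul_apply, smul_eq_mul,
    mul_assoc] using key

noncomputable def contract₁₂ (T : ι → κ → μ → ℂ) (x : ι → ℂ) (y : κ → ℂ) (k : μ) : ℂ :=
  ∑ i, ∑ j, T i j k * conj (x i) * conj (y j)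

theorem sum_norm_sub_rankOne_sq (T : ι → κ → μ → ℂ) {x : ι → ℂ} {y : κ → ℂ}
    (hx : ∑ i, ‖x i‖ ^ 2 = 1) (hy : ∑ j, ‖y j‖ ^ 2 = 1) (β : μ → ℂ) :
    ∑ i, ∑ j, ∑ k, ‖T i j k - β k * x i * y j‖ ^ 2 =
      ∑ i, ∑ j, ∑ k, ‖T i j k‖ ^ 2 - ∑ k, ‖contract₁₂ T x y k‖ ^ 2
        + ∑ k, ‖β k - contract₁₂ T x y k‖ ^ 2 := by
  have sum_comm₃ : ∀ f : ι → κ → μ → ℝ, ∑ i, ∑ j, ∑ k, f i j k = ∑ k, ∑ i, ∑ j, f i j k :=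
    fun f => (Finset.sum_congr rfl fun i _ => Finset.sum_comm).trans Finset.sum_comm
  rw [sum_comm₃, sum_comm₃, ← Finset.sum_sub_distrib, ← Finset.sum_add_distrib]
  exact Finset.sum_congr rfl fun k _ => sum_norm_sub_mul_mul_sq (fun i j => T i j k) hx hy (β k)

theorem sum_norm_sub_rankOne_contract₁₂_sq (T : ι → κ → μ → ℂ) {x : ι → ℂ} {y : κ → ℂ}
    (hx : ∑ i, ‖x i‖ ^ 2 = 1) (hy : ∑ j, ‖y j‖ ^ 2 = 1) :
    ∑ i, ∑ j, ∑ k, ‖T i j k - contract₁₂ T x y k * x i * y j‖ ^ 2 =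
      ∑ i, ∑ j, ∑ k, ‖T i j k‖ ^ 2 - ∑ k, ‖contract₁₂ T x y k‖ ^ 2 := by
  simp [sum_norm_sub_rankOne_sq T hx hy]

theorem sub_sum_norm_contract₁₂_sq_le (T : ι → κ → μ → ℂ) {x : ι → ℂ} {y : κ → ℂ}
    (hx : ∑ i, ‖x i‖ ^ 2 = 1) (hy : ∑ j, ‖y j‖ ^ 2 = 1) (β : μ → ℂ) :
    ∑ i, ∑ j, ∑ k, ‖T i j k‖ ^ 2 - ∑ k, ‖contract₁₂ T x y k‖ ^ 2 ≤
      ∑ i, ∑ j, ∑ k, ‖T i j k - β k * x i * y j‖ ^ 2 := by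
  rw [sum_norm_sub_rankOne_sq T hx hy]
  exact le_add_of_nonneg_right (Finset.sum_nonneg fun k _ => sq_nonneg _)

end RankOneResidual

section AlternatingMaximization

variable {α β R : Type*} [Preorder R] (g : α → β → R) {P : α → Prop} {Q : β → Prop}
  {x : ℕ → α} {y : ℕ → β}

theorem le_alternatingMax_succ (hx : ∀ t, P (x t))
    (hymax : ∀ t y', Q y' → g (x t) y' ≤ g (x t) (y (t + 1)))
    (hxmax : ∀ t x', P x' → g x' (y (t + 1)) ≤ g (x (t + 1)) (y (t + 1)))
    (t : ℕ) {y' : β} (hy' : Q y') :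
    g (x t) y' ≤ g (x (t + 1)) (y (t + 1)) :=
  (hymax t y' hy').trans (hxmax t (x t) (hx t))

theorem le_alternatingMax (hx : ∀ t, P (x t)) (hy : ∀ t, Q (y t))
    (hymax : ∀ t y', Q y' → g (x t) y' ≤ g (x t) (y (t + 1)))
    (hxmax : ∀ t x', P x' → g x' (y (t + 1)) ≤ g (x (t + 1)) (y (t + 1)))
    {y₀ : β} (hy₀ : Q y₀) {t : ℕ} (ht : 1 ≤ t) : g (x 0) y₀ ≤ g (x t) (y t) := by
  obtain ⟨s, rfl⟩ : ∃ s, t = s + 1 := ⟨t - 1, by omega⟩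
  have hmono : Monotone fun s => g (x (s + 1)) (y (s + 1)) :=
    monotone_nat_of_le_succ fun s => le_alternatingMax_succ g hx hymax hxmax (s + 1) (hy (s + 1))
  exact (le_alternatingMax_succ g hx hymax hxmax 0 hy₀).trans (hmono (Nat.zero_le s))

end AlternatingMaximization

/-- The coupled-eigenvalue iteration, initialized from a rank-1 approximation built on the
unit vectors `(x₀, y₀)`, produces after `t ≥ 1` steps a rank-1 approximation at least as good
as the initial one. -/
theorem coupled_eigenvalue_improves {I1 I2 I3 : ℕ}
    (T : Fin I1 → Fin I2 → Fin I3 → ℂ)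
    (g : (Fin I1 → ℂ) → (Fin I2 → ℂ) → ℝ)
    (hg : ∀ x y, g x y =
      ∑ k, ‖∑ i, ∑ j, T i j k * conj (x i) * conj (y j)‖ ^ 2)
    (x0 : Fin I1 → ℂ) (y0 : Fin I2 → ℂ)
    (hx0 : ∑ i, ‖x0 i‖ ^ 2 = 1)
    (hy0 : ∑ j, ‖y0 j‖ ^ 2 = 1)
    (β : Fin I3 → ℂ)
    (φT : Fin I1 → Fin I2 → Fin I3 → ℂ)
    (hφT : ∀ i j k, φT i j k = β k * x0 i * y0 j)
    (x : ℕ → Fin I1 → ℂ) (y : ℕ → Fin I2 → ℂ)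
    (hxinit : x 0 = x0)
    (hxunit : ∀ t, ∑ i, ‖x t i‖ ^ 2 = 1)
    (hyunit : ∀ t, ∑ j, ‖y t j‖ ^ 2 = 1)
    (hymax : ∀ t, ∀ y' : Fin I2 → ℂ, (∑ j, ‖y' j‖ ^ 2 = 1) →
      g (x t) y' ≤ g (x t) (y (t + 1)))
    (hxmax : ∀ t, ∀ x' : Fin I1 → ℂ, (∑ i, ‖x' i‖ ^ 2 = 1) →
      g x' (y (t + 1)) ≤ g (x (t + 1)) (y (t + 1))) :
    ∀ t, 1 ≤ t →
      ∀ αstar : Fin I3 → ℂ,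
        (∀ k, αstar k = ∑ i, ∑ j, T i j k * conj (x t i) * conj (y t j)) →
        ∀ φstarT : Fin I1 → Fin I2 → Fin I3 → ℂ,
          (∀ i j k, φstarT i j k = αstar k * x t i * y t j) →
          ∑ i, ∑ j, ∑ k, ‖T i j k - φstarT i j k‖ ^ 2 ≤
            ∑ i, ∑ j, ∑ k, ‖T i j k - φT i j k‖ ^ 2 := by
  intro t ht αstar hαstar φstarT hφstarT
  have hg' : ∀ x y, g x y = ∑ k, ‖contract₁₂ T x y k‖ ^ 2 := hg
  have hαstar' : αstar = contract₁₂ T (x t) (y t) := funext hαstar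
  have hgain : g x0 y0 ≤ g (x t) (y t) :=
    hxinit ▸ le_alternatingMax g hxunit hyunit hymax hxmax hy0 ht
  calc ∑ i, ∑ j, ∑ k, ‖T i j k - φstarT i j k‖ ^ 2
      = ∑ i, ∑ j, ∑ k, ‖T i j k‖ ^ 2 - g (x t) (y t) := by
        simp only [hφstarT, hαstar', hg']
        exact sum_norm_sub_rankOne_contract₁₂_sq T (hxunit t) (hyunit t)
    _ ≤ ∑ i, ∑ j, ∑ k, ‖T i j k‖ ^ 2 - g x0 y0 := sub_le_sub_left hgain _
    _ ≤ ∑ i, ∑ j, ∑ k, ‖T i j k - φT i j k‖ ^ 2 := by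
        simp only [hφT, hg']
        exact sub_sum_norm_contract₁₂_sq_le T hx0 hy0 β
end

section
/- Let T : Fin I₁ → Fin I₂ → Fin I₃ → ℂ be a three-way tensor and define, for unit vectors x : Fin I₁ → ℂ and y : Fin I₂ → ℂ, g(x,y) = ∑_k |∑_{i,j} T i j k · conj(x i) · conj(y j)|². Suppose (x_t) and (y_t) are sequences of unit vectors such that for every t, y_{t+1} maximizes y ↦ g(x_t, y) over the unit sphere and x_{t+1} maximizes x ↦ g(x, y_{t+1}) over the unit sphere. Then g(x_t, y_t) ≤ ∑_{i,j,k} |T i j k|² for all t, and the sequence t ↦ g(x_t, y_t) converges to a (finite) limit. -/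
/-! The objective increases at every half-step of the alternating maximization, since the
previous iterate is itself a competitor; and by the triangle and Cauchy–Schwarz inequalities it
never exceeds `‖T‖²` on unit vectors. A bounded monotone real sequence converges. -/

open ComplexConjugate Finset

theorem norm_sum_sum_mul_conj_sq_le {𝕜 ι κ : Type*} [RCLike 𝕜] [Fintype ι] [Fintype κ]
    (a : ι → κ → 𝕜) (x : ι → 𝕜) (y : κ → 𝕜) :
    ‖∑ i, ∑ j, a i j * conj (x i) * conj (y j)‖ ^ 2
      ≤ (∑ i, ∑ j, ‖a i j‖ ^ 2) * ((∑ i, ‖x i‖ ^ 2) * ∑ j, ‖y j‖ ^ 2) := by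
  have htriangle : ‖∑ i, ∑ j, a i j * conj (x i) * conj (y j)‖
      ≤ ∑ p ∈ univ ×ˢ univ, ‖a p.1 p.2‖ * (‖x p.1‖ * ‖y p.2‖) := by
    rw [← sum_product']
    refine (norm_sum_le _ _).trans_eq (sum_congr rfl fun p _ => ?_)
    simp only [norm_mul, RCLike.norm_conj, mul_assoc]
  calc ‖∑ i, ∑ j, a i j * conj (x i) * conj (y j)‖ ^ 2
      ≤ (∑ p ∈ univ ×ˢ univ, ‖a p.1 p.2‖ * (‖x p.1‖ * ‖y p.2‖)) ^ 2 :=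
        pow_le_pow_left₀ (norm_nonneg _) htriangle 2
    _ ≤ (∑ p ∈ univ ×ˢ univ, ‖a p.1 p.2‖ ^ 2)
          * ∑ p ∈ univ ×ˢ univ, (‖x p.1‖ * ‖y p.2‖) ^ 2 :=
        sum_mul_sq_le_sq_mul_sq _ _ _
    _ = (∑ i, ∑ j, ‖a i j‖ ^ 2) * ((∑ i, ‖x i‖ ^ 2) * ∑ j, ‖y j‖ ^ 2) := by
        simp only [sum_product, mul_pow, ← mul_sum, ← sum_mul]

theorem sum_norm_contract_sq_le {𝕜 ι κ μ : Type*} [RCLike 𝕜] [Fintype ι] [Fintype κ]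
    [Fintype μ] (T : ι → κ → μ → 𝕜) {x : ι → 𝕜} {y : κ → 𝕜}
    (hx : ∑ i, ‖x i‖ ^ 2 = 1) (hy : ∑ j, ‖y j‖ ^ 2 = 1) :
    ∑ k, ‖∑ i, ∑ j, T i j k * conj (x i) * conj (y j)‖ ^ 2
      ≤ ∑ i, ∑ j, ∑ k, ‖T i j k‖ ^ 2 := by
  calc ∑ k, ‖∑ i, ∑ j, T i j k * conj (x i) * conj (y j)‖ ^ 2
      ≤ ∑ k, ∑ i, ∑ j, ‖T i j k‖ ^ 2 := sum_le_sum fun k _ => by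
        simpa only [hx, hy, mul_one] using norm_sum_sum_mul_conj_sq_le (T · · k) x y
    _ = ∑ i, ∑ j, ∑ k, ‖T i j k‖ ^ 2 := by
        rw [sum_comm]
        exact sum_congr rfl fun i _ => sum_comm

theorem monotone_of_alternating_maximization {α β γ : Type*} [Preorder γ] {f : α → β → γ}
    {s : Set α} {t : Set β} {x : ℕ → α} {y : ℕ → β} (hx : ∀ n, x n ∈ s) (hy : ∀ n, y n ∈ t)
    (hymax : ∀ n, ∀ y' ∈ t, f (x n) y' ≤ f (x n) (y (n + 1)))
    (hxmax : ∀ n, ∀ x' ∈ s, f x' (y (n + 1)) ≤ f (x (n + 1)) (y (n + 1))) :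
    Monotone fun n => f (x n) (y n) :=
  monotone_nat_of_le_succ fun n =>
    (hymax n (y n) (hy n)).trans (hxmax n (x n) (hx n))

/-- In the coupled-eigenvalue (alternating maximization) iteration, the objective
`g (x_t) (y_t)` is bounded above by `‖T‖²` and the sequence `t ↦ g (x_t) (y_t)` converges. -/
theorem coupled_eigenvalue_converges {I1 I2 I3 : ℕ}
    (T : Fin I1 → Fin I2 → Fin I3 → ℂ)
    (g : (Fin I1 → ℂ) → (Fin I2 → ℂ) → ℝ)
    (hg : ∀ x y, g x y =
      ∑ k, ‖∑ i, ∑ j, T i j k * conj (x i) * conj (y j)‖ ^ 2)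
    (x : ℕ → Fin I1 → ℂ) (y : ℕ → Fin I2 → ℂ)
    (hxunit : ∀ t, ∑ i, ‖x t i‖ ^ 2 = 1)
    (hyunit : ∀ t, ∑ j, ‖y t j‖ ^ 2 = 1)
    (hymax : ∀ t, ∀ y' : Fin I2 → ℂ, (∑ j, ‖y' j‖ ^ 2 = 1) →
      g (x t) y' ≤ g (x t) (y (t + 1)))
    (hxmax : ∀ t, ∀ x' : Fin I1 → ℂ, (∑ i, ‖x' i‖ ^ 2 = 1) →
      g x' (y (t + 1)) ≤ g (x (t + 1)) (y (t + 1))) :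
    (∀ t, g (x t) (y t) ≤ ∑ i, ∑ j, ∑ k, ‖T i j k‖ ^ 2) ∧
      ∃ L : ℝ, Filter.Tendsto (fun t => g (x t) (y t)) Filter.atTop (nhds L) := by
  have hbound : ∀ t, g (x t) (y t) ≤ ∑ i, ∑ j, ∑ k, ‖T i j k‖ ^ 2 := fun t => by
    rw [hg]
    exact sum_norm_contract_sq_le T (hxunit t) (hyunit t)
  have hmono : Monotone fun t => g (x t) (y t) :=
    monotone_of_alternating_maximization (s := {x' : Fin I1 → ℂ | ∑ i, ‖x' i‖ ^ 2 = 1})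
      (t := {y' : Fin I2 → ℂ | ∑ j, ‖y' j‖ ^ 2 = 1}) hxunit hyunit hymax hxmax
  have hbdd : BddAbove (Set.range fun t => g (x t) (y t)) :=
    ⟨_, Set.forall_mem_range.2 hbound⟩
  exact ⟨hbound, _, tendsto_atTop_ciSup hmono hbdd⟩
end

section
/- Let R ≥ 1 and let e : ℕ → (N-way complex tensors of a fixed size) be the sequence of end-of-iteration residuals of the deflation (DCPD) algorithm: for every l, there exist tensors E_0^{(l)} = e(l), E_1^{(l)}, …, E_R^{(l)} = e(l+1) and tensors X_1^{(l)}, …, X_R^{(l)} of rank at most 1 such that E_r^{(l)} = (X_r^{(l)} + E_{r−1}^{(l)}) − φ_r^{(l)}, where φ_r^{(l)} is a best rank-1 approximation of X_r^{(l)} + E_{r−1}^{(l)}. Then the real sequence l ↦ ‖e(l)‖ is antitone (monotonically non-increasing). -/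
open ComplexConjugate

/-- The Frobenius norm of an `N`-way complex tensor. -/
noncomputable def tnorm {N : ℕ} {d : Fin N → ℕ} (T : ((n : Fin N) → Fin (d n)) → ℂ) : ℝ :=
  Real.sqrt (∑ x, ‖T x‖ ^ 2)

/-- A tensor has rank at most `1` when it is an outer product of vectors. -/
def RankOne {N : ℕ} {d : Fin N → ℕ} (T : ((n : Fin N) → Fin (d n)) → ℂ) : Prop :=
  ∃ a : (n : Fin N) → Fin (d n) → ℂ, ∀ x, T x = ∏ n, a n (x n)

/-- `φ` is a best rank-1 approximation of `T`. -/
def BestRankOneApprox {N : ℕ} {d : Fin N → ℕ}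
    (T φ : ((n : Fin N) → Fin (d n)) → ℂ) : Prop :=
  RankOne φ ∧ ∀ Z : ((n : Fin N) → Fin (d n)) → ℂ, RankOne Z → tnorm (T - φ) ≤ tnorm (T - Z)

/-!
Each deflation step cannot increase the residual norm: the rank-1 tensor `X` that was added
back is itself a candidate approximation of `X + E`, leaving the residual `E`, so the best
approximation leaves a residual of norm at most `‖E‖`. Chaining the `R` steps of an iteration
gives `‖e (l + 1)‖ ≤ ‖e l‖`.
-/

theorem apply_le_apply_zero_of_succ_le {α : Type*} [Preorder α] {f : ℕ → α} {R : ℕ}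
    (hf : ∀ r < R, f (r + 1) ≤ f r) : f R ≤ f 0 := by
  induction R with
  | zero => exact le_rfl
  | succ R ih =>
    exact (hf R R.lt_succ_self).trans (ih fun r hr => hf r (hr.trans R.lt_succ_self))

theorem tnorm_add_sub_bestRankOneApprox_le {N : ℕ} {d : Fin N → ℕ}
    {X E φ : ((n : Fin N) → Fin (d n)) → ℂ} (hX : RankOne X)
    (hφ : BestRankOneApprox (X + E) φ) : tnorm ((X + E) - φ) ≤ tnorm E := by
  simpa using hφ.2 X hX

theorem dcpd_residual_antitone_general {N : ℕ} {d : Fin N → ℕ}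
    (R : ℕ)
    (e : ℕ → ((n : Fin N) → Fin (d n)) → ℂ)
    (h : ∀ l : ℕ, ∃ E X φ : ℕ → ((n : Fin N) → Fin (d n)) → ℂ,
      E 0 = e l ∧ E R = e (l + 1) ∧
      ∀ r ∈ Finset.Icc 1 R, RankOne (X r) ∧
        BestRankOneApprox (X r + E (r - 1)) (φ r) ∧
        E r = (X r + E (r - 1)) - φ r) :
    Antitone fun l => tnorm (e l) := by
  refine antitone_nat_of_succ_le fun l => ?_
  obtain ⟨E, X, φ, hE0, hER, hstep⟩ := h l
  simp only [← hE0, ← hER]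
  refine apply_le_apply_zero_of_succ_le (f := fun r => tnorm (E r)) fun r hr => ?_
  obtain ⟨hX, hφ, hE⟩ := hstep (r + 1) (Finset.mem_Icc.mpr ⟨r.succ_pos, hr⟩)
  rw [hE]
  exact tnorm_add_sub_bestRankOneApprox_le hX hφ

/-- The norms of the end-of-iteration residuals of the DCPD deflation algorithm form a
monotonically non-increasing sequence. -/
theorem dcpd_residual_antitone {N : ℕ} {d : Fin N → ℕ}
    (R : ℕ) (hR : 1 ≤ R)
    (e : ℕ → ((n : Fin N) → Fin (d n)) → ℂ)
    (h : ∀ l : ℕ, ∃ E X φ : ℕ → ((n : Fin N) → Fin (d n)) → ℂ,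
      E 0 = e l ∧ E R = e (l + 1) ∧
      ∀ r ∈ Finset.Icc 1 R, RankOne (X r) ∧
        BestRankOneApprox (X r + E (r - 1)) (φ r) ∧
        E r = (X r + E (r - 1)) - φ r) :
    Antitone fun l => tnorm (e l) :=
  dcpd_residual_antitone_general R e h
end
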